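/- Let p_1, …, p_n, w_1, …, w_n ≥ 0 and P, W ≥ 0 be given (a Knapsack instance). Construct the BNPG game with asymmetric altruism: V = {u_1, …, u_{2n+1}}; E = {{u_i, u_{n+i}}, {u_i, u_{2n+1}} : i ∈ [n]} (a tree); a = 1; g_{u_{2n+1}}(x) = 0, g_{u_i}(x) = p_i·x and g_{u_{n+i}}(x) = P·x for all x ≥ 0 and i ∈ [n]; c_v = P for all v ∈ V. Then the following are equivalent: (1) there exists S ⊆ [n] with ∑_{i∈S} p_i ≥ P and ∑_{i∈S} w_i ≤ W; (2) there exists a set E' of directed edges, each edge (u,v) ∈ E' satisfying {u,v} ∈ E, such that ∑_{i : (u_{2n+1},u_i) ∈ E'} w_i ≤ W and the all-ones profile (every player invests) is a pure strategy Nash equilibrium of the BNPG game with asymmetric altruism (G, (V,E'), (g_v), (c_v), 1). (Here adding edge (u_{2n+1},u_i) costs w_i, and all other permitted directed edges cost 0, so condition (2) says the all-invest target profile can be made a PSNE within budget W.) -/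

import Mathlib

open Finset

/-! At the all-invest profile the only deviation is to withdraw, which saves `c v` but loses the
marginal gain of `g` at `v` and, through altruism, at each out-neighbour of `v`. In the reduction
each `u_i` is stable by caring for its leaf `u_{n+i}` (marginal gain `P`), each leaf is stable on
its own, and the centre `u_{2n+1}`, with no gain of its own, is stable exactly when the `p_i` of
the `u_i` it cares about sum to at least `P`; these are the paid edges, of cost `w_i`. -/

/-- `Δg(t) = g(t+1) - g(t)`. -/
def dg (g : ℕ → ℝ) (t : ℕ) : ℝ := g (t + 1) - g t

/-- Number of `G`-neighbors of `v` playing 1 in the profile `x`. -/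
def nv {W : Type*} [Fintype W] [DecidableEq W] (G : SimpleGraph W) [DecidableRel G.Adj]
    (x : W → Bool) (v : W) : ℕ :=
  ((G.neighborFinset v).filter (fun u => x u = true)).card

/-- Utility of player `v` in a BNPG game with altruism: input graph `G`,
altruistic (out-)neighborhoods `N`, externality functions `g`, costs `c`,
altruism parameter `a`. -/
def util {W : Type*} [Fintype W] [DecidableEq W] (G : SimpleGraph W) [DecidableRel G.Adj]
    (N : W → Finset W) (g : W → ℕ → ℝ) (c : W → ℝ) (a : ℝ)
    (x : W → Bool) (v : W) : ℝ :=
  g v ((x v).toNat + nv G x v)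
    + a * ∑ u ∈ N v, g u ((x u).toNat + nv G x u)
    - c v * (x v).toNat

/-- Pure strategy Nash equilibrium of a BNPG game with altruism. -/
def isPSNE {W : Type*} [Fintype W] [DecidableEq W] (G : SimpleGraph W) [DecidableRel G.Adj]
    (N : W → Finset W) (g : W → ℕ → ℝ) (c : W → ℝ) (a : ℝ) (x : W → Bool) : Prop :=
  ∀ v : W, ∀ b : Bool,
    util G N g c a x v ≥ util G N g c a (Function.update x v b) v

/-- Vertex set of the Knapsack reduction: `Sum.inl (Sum.inl i)` is `u_{i+1}`,
`Sum.inl (Sum.inr i)` is `u_{n+i+1}`, and `Sum.inr ()` is `u_{2n+1}`. -/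
abbrev VK (n : ℕ) := (Fin n ⊕ Fin n) ⊕ Unit

/-- Adjacency of the tree `E = {{u_i, u_{n+i}}, {u_i, u_{2n+1}} : i ∈ [n]}`. -/
def adjK {n : ℕ} : VK n → VK n → Bool
  | Sum.inl (Sum.inl i), Sum.inl (Sum.inr j) => decide (i = j)
  | Sum.inl (Sum.inr i), Sum.inl (Sum.inl j) => decide (i = j)
  | Sum.inl (Sum.inl _), Sum.inr _ => true
  | Sum.inr _, Sum.inl (Sum.inl _) => true
  | _, _ => false

/-- The input network (a tree) of the Knapsack reduction. -/
def GK (n : ℕ) : SimpleGraph (VK n) where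
  Adj a b := adjK a b = true
  symm := by
    constructor
    rintro ((i | i) | u) ((j | j) | u') h <;> simp_all [adjK]
  loopless := by
    constructor
    rintro ((i | i) | u) h <;> simp [adjK] at h

instance (n : ℕ) : DecidableRel (GK n).Adj :=
  fun a b => inferInstanceAs (Decidable (adjK a b = true))

/-- Externality functions: `g_{u_i}(x) = p_i·x`, `g_{u_{n+i}}(x) = P·x`,
`g_{u_{2n+1}}(x) = 0`. -/
def gK {n : ℕ} (p : Fin n → ℝ) (P : ℝ) : VK n → ℕ → ℝ
  | Sum.inl (Sum.inl i) => fun t => p i * t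
  | Sum.inl (Sum.inr _) => fun t => P * t
  | Sum.inr _ => fun _ => 0

section AllInvest

variable {W : Type*} [Fintype W] [DecidableEq W] (G : SimpleGraph W) [DecidableRel G.Adj]

lemma nv_allTrue (v : W) : nv G (fun _ => true) v = G.degree v := by
  unfold nv
  rw [Finset.filter_true_of_mem fun _ _ => rfl]
  rfl

lemma nv_update_false_self (v : W) :
    nv G (Function.update (fun _ => true) v false) v = G.degree v := by
  unfold nv
  rw [Finset.filter_true_of_mem]
  · rfl
  · intro u hu
    have hne : u ≠ v := (G.mem_neighborFinset v u |>.mp hu).ne'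
    simp [hne]

lemma nv_update_false_add_one {u v : W} (h : G.Adj u v) :
    nv G (Function.update (fun _ => true) v false) u + 1 = G.degree u := by
  have hfilter : (G.neighborFinset u).filter
      (fun w => Function.update (fun _ => true) v false w = true) = (G.neighborFinset u).erase v := by
    ext w
    by_cases hw : w = v <;> simp [hw]
  rw [nv, hfilter, Finset.card_erase_add_one ((G.mem_neighborFinset u v).mpr h)]
  rfl

variable {G} {N : W → Finset W} (g : W → ℕ → ℝ) (c : W → ℝ) (a : ℝ)

/-- Withdrawing lowers the investment count by one exactly at `v` and at its `G`-neighbours,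
among which are all altruistic out-neighbours of `v`. -/
lemma util_allTrue_sub_util_update_false (hN : ∀ v, ∀ u ∈ N v, G.Adj v u) (v : W) :
    util G N g c a (fun _ => true) v
        - util G N g c a (Function.update (fun _ => true) v false) v
      = dg (g v) (G.degree v) + a * ∑ u ∈ N v, dg (g u) (G.degree u) - c v := by
  have hout : ∀ u ∈ N v,
      g u ((Function.update (fun _ => true) v false u).toNat
          + nv G (Function.update (fun _ => true) v false) u) = g u (G.degree u) := by
    intro u hu
    have hne : u ≠ v := (hN v u hu).ne'
    rw [Function.update_of_ne hne, Bool.toNat_true, add_comm,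
      nv_update_false_add_one G (hN v u hu).symm]
  simp only [util, Function.update_self, Bool.toNat_true, Bool.toNat_false, zero_add,
    nv_allTrue, nv_update_false_self, Finset.sum_congr rfl hout, dg, Finset.sum_sub_distrib,
    Nat.add_comm 1]
  ring

lemma isPSNE_allTrue_iff (hN : ∀ v, ∀ u ∈ N v, G.Adj v u) :
    isPSNE G N g c a (fun _ => true) ↔
      ∀ v, c v ≤ dg (g v) (G.degree v) + a * ∑ u ∈ N v, dg (g u) (G.degree u) := by
  refine forall_congr' fun v => ⟨fun h => ?_, fun h b => ?_⟩
  · linarith [h false, util_allTrue_sub_util_update_false g c a hN v]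
  · cases b
    · linarith [h, util_allTrue_sub_util_update_false g c a hN v]
    · simp

end AllInvest

def slopeK {n : ℕ} (p : Fin n → ℝ) (P : ℝ) : VK n → ℝ
  | Sum.inl (Sum.inl i) => p i
  | Sum.inl (Sum.inr _) => P
  | Sum.inr _ => 0

lemma dg_gK {n : ℕ} (p : Fin n → ℝ) (P : ℝ) (v : VK n) (t : ℕ) :
    dg (gK p P v) t = slopeK p P v := by
  rcases v with (i | i) | _ <;> simp only [dg, gK, slopeK, Nat.cast_succ] <;> ring

lemma isPSNE_GK_allTrue_iff {n : ℕ} (p : Fin n → ℝ) (P : ℝ) {N : VK n → Finset (VK n)}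
    (hN : ∀ v, ∀ u ∈ N v, (GK n).Adj v u) :
    isPSNE (GK n) N (gK p P) (fun _ => P) 1 (fun _ => true) ↔
      ∀ v, P ≤ slopeK p P v + ∑ u ∈ N v, slopeK p P u := by
  simp only [isPSNE_allTrue_iff _ _ _ hN, dg_gK, one_mul]

def knapsackNetwork {n : ℕ} (S : Finset (Fin n)) : VK n → Finset (VK n)
  | Sum.inl (Sum.inl i) => {Sum.inl (Sum.inr i)}
  | Sum.inl (Sum.inr _) => ∅
  | Sum.inr _ => S.map (Function.Embedding.inl.trans Function.Embedding.inl)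

lemma knapsackNetwork_adj {n : ℕ} (S : Finset (Fin n)) :
    ∀ v, ∀ u ∈ knapsackNetwork S v, (GK n).Adj v u := by
  rintro ((i | i) | _) u hu <;> simp only [knapsackNetwork, Finset.mem_singleton,
    Finset.notMem_empty, Finset.mem_map] at hu
  · subst hu
    simp [GK, adjK]
  · obtain ⟨j, -, rfl⟩ := hu
    simp [GK, adjK]

lemma filter_mem_knapsackNetwork {n : ℕ} (S : Finset (Fin n)) :
    Finset.univ.filter
        (fun i : Fin n => (Sum.inl (Sum.inl i) : VK n) ∈ knapsackNetwork S (Sum.inr ())) = S := by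
  ext i
  simp [knapsackNetwork]

lemma isPSNE_knapsackNetwork {n : ℕ} {p : Fin n → ℝ} {P : ℝ} (hp : ∀ i, 0 ≤ p i)
    {S : Finset (Fin n)} (hS : P ≤ ∑ i ∈ S, p i) :
    isPSNE (GK n) (knapsackNetwork S) (gK p P) (fun _ => P) 1 (fun _ => true) := by
  rw [isPSNE_GK_allTrue_iff p P (knapsackNetwork_adj S)]
  rintro ((i | i) | _)
  · simpa [knapsackNetwork, slopeK] using hp i
  · simp [knapsackNetwork, slopeK]
  · simpa [knapsackNetwork, slopeK] using hS

lemma centre_network_eq_map {n : ℕ} {N : VK n → Finset (VK n)}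
    (hN : ∀ v, ∀ u ∈ N v, (GK n).Adj v u) :
    N (Sum.inr ()) = (Finset.univ.filter
        (fun i : Fin n => (Sum.inl (Sum.inl i) : VK n) ∈ N (Sum.inr ()))).map
      (Function.Embedding.inl.trans Function.Embedding.inl) := by
  ext u
  refine ⟨fun hu => ?_, fun hu => ?_⟩
  · rcases u with (i | i) | _
    · simpa using hu
    all_goals simpa [GK, adjK] using hN _ _ hu
  · obtain ⟨i, hi, rfl⟩ := Finset.mem_map.mp hu
    simpa using hi

theorem statement14_general (n : ℕ) (p w : Fin n → ℝ) (P W : ℝ)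
    (hp : ∀ i, 0 ≤ p i) :
    (∃ S : Finset (Fin n), P ≤ ∑ i ∈ S, p i ∧ ∑ i ∈ S, w i ≤ W) ↔
    (∃ N : VK n → Finset (VK n),
      (∀ v : VK n, ∀ u ∈ N v, (GK n).Adj v u) ∧
      (∑ i ∈ Finset.univ.filter
          (fun i : Fin n => (Sum.inl (Sum.inl i) : VK n) ∈ N (Sum.inr ())), w i) ≤ W ∧
      isPSNE (GK n) N (gK p P) (fun _ => P) 1 (fun _ => true)) := by
  constructor
  · rintro ⟨S, hSP, hSW⟩
    refine ⟨knapsackNetwork S, knapsackNetwork_adj S, ?_, isPSNE_knapsackNetwork hp hSP⟩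
    rwa [filter_mem_knapsackNetwork]
  · rintro ⟨N, hN, hcost, hPSNE⟩
    refine ⟨_, ?_, hcost⟩
    have hcentre := (isPSNE_GK_allTrue_iff p P hN).mp hPSNE (Sum.inr ())
    rw [centre_network_eq_map hN, Finset.sum_map] at hcentre
    simpa [slopeK] using hcentre

/-- correctness of the Knapsack reduction for ANM with asymmetric
altruism on a tree. The Knapsack instance `(p, w, P, W)` has a solution iff there is
a directed altruistic network `N` (edges only between `G`-adjacent vertices) whose
cost — the total weight of the edges `(u_{2n+1}, u_i)` used, all other permitted
edges being free — is at most `W`, making the all-invest profile a PSNE. -/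
theorem statement14 (n : ℕ) (p w : Fin n → ℝ) (P W : ℝ)
    (hp : ∀ i, 0 ≤ p i) (hw : ∀ i, 0 ≤ w i) (hP : 0 ≤ P) (hW : 0 ≤ W) :
    (∃ S : Finset (Fin n), P ≤ ∑ i ∈ S, p i ∧ ∑ i ∈ S, w i ≤ W) ↔
    (∃ N : VK n → Finset (VK n),
      (∀ v : VK n, ∀ u ∈ N v, (GK n).Adj v u) ∧
      (∑ i ∈ Finset.univ.filter
          (fun i : Fin n => (Sum.inl (Sum.inl i) : VK n) ∈ N (Sum.inr ())), w i) ≤ W ∧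
      isPSNE (GK n) N (gK p P) (fun _ => P) 1 (fun _ => true)) :=
  statement14_general n p w P W hp
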